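/- arXiv:1504.03878 — 2 statements merged into one kernel-verified Lean document; each statement's English description precedes it below -/
import Mathlib

section
/- Fix $p_0 \in [0,1)$, $\theta \in (0, (1-p_0)/n]$, and let $\mathcal{A}_\theta = \{p \in (0,1)^n : \sum_i p_i = 1-p_0, \; p_j \geq \theta \text{ for all } j\}$. Let $\mathcal{B}_\theta \subseteq \mathcal{A}_\theta$ be the set of vectors with all entries equal to $\theta$ except one entry equal to $\gamma = 1 - p_0 - (n-1)\theta$. Then for every $p \in \mathcal{A}_\theta$, every $q \in \mathcal{B}_\theta$, and every $c \in \{1,\ldots,n\}$, $T_{c,n}(p) \leq_{st} T_{c,n}(q)$. -/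
open Finset

/-- Number of distinct coupon types in a length-`k` sequence of draws. -/
def distinctCount {n k : ℕ} (f : Fin k → Fin n) : ℕ :=
  (Finset.image f Finset.univ).card

/-- `Pr{T_{c,n}(p) > k}`: probability that fewer than `c` distinct coupons
appear in `k` i.i.d. draws from the distribution `p` on `{1,…,n}`. -/
noncomputable def tailProb (n c k : ℕ) (p : Fin n → ℝ) : ℝ :=
  ∑ f : Fin k → Fin n, if distinctCount f < c then ∏ t, p (f t) else 0

/-- Full distribution on `{0,1,…,n}` where coupon `0` is the null coupon, drawn
with probability `p₀ = 1 - ∑ pᵢ`. -/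
noncomputable def fullDist {n : ℕ} (p : Fin n → ℝ) : Fin (n + 1) → ℝ :=
  Fin.cases (1 - ∑ j, p j) p

/-- Number of distinct non-null coupon types in a length-`k` draw sequence. -/
def nonnullCount {n k : ℕ} (f : Fin k → Fin (n + 1)) : ℕ :=
  ((Finset.image f Finset.univ).erase 0).card

/-- `Pr{T_{c,n}(p) > k}` in the generalized (null-coupon) model: probability that
fewer than `c` distinct non-null coupons appear among `k` i.i.d. draws. -/
noncomputable def tailProb0 (n c k : ℕ) (p : Fin n → ℝ) : ℝ :=
  ∑ f : Fin k → Fin (n + 1), if nonnullCount f < c then ∏ t, fullDist p (f t) else 0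

/-!
Fix two non-null coupons `a ≠ b` and give them probabilities `t` and `s - t`, all other
probabilities fixed. Group the draw sequences by the sequence obtained by relabelling `b` as `a`.
Within a group with `m` merged positions, only the two fillings using `a` alone or `b` alone see
one coupon fewer, so the group contributes `C * (v * s ^ m + (u - v) * (t ^ m + (s - t) ^ m))`
with `C ≥ 0` and `u ≥ v`. Hence the tail probability is convex in `t` on `[0, s]` and symmetric
under `t ↦ s - t`, so on `[θ, s - θ]` it is largest at `t = θ`. Lowering the coupons other than
`j` to `θ` one at a time, each time moving the excess mass onto `j`, reaches `q` without
decreasing the tail probability.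
-/
theorem ConvexOn.finset_sum {𝕜 E β ι : Type*} [Semiring 𝕜] [PartialOrder 𝕜] [AddCommMonoid E]
    [AddCommMonoid β] [PartialOrder β] [IsOrderedAddMonoid β] [SMul 𝕜 E] [Module 𝕜 β]
    {s : Set E} (hs : Convex 𝕜 s) {t : Finset ι} {f : ι → E → β}
    (hf : ∀ i ∈ t, ConvexOn 𝕜 s (f i)) : ConvexOn 𝕜 s fun x => ∑ i ∈ t, f i x := by
  classical
  induction t using Finset.induction_on with
  | empty => simpa using convexOn_const 0 hs
  | insert i t hi ih =>
    simp only [Finset.sum_insert hi]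
    exact (hf i (mem_insert_self i t)).add (ih fun j hj => hf j (mem_insert_of_mem hj))

theorem convexOn_sub_pow (s : ℝ) (m : ℕ) : ConvexOn ℝ (Set.Iic s) fun t : ℝ => (s - t) ^ m := by
  have := (convexOn_pow m).comp_affineMap (AffineMap.const ℝ ℝ s - AffineMap.id ℝ ℝ)
  have hpre : (Function.const ℝ s - id) ⁻¹' Set.Ici 0 = Set.Iic s := by
    ext; simp
  simpa [hpre, Function.comp_def] using this

theorem ConvexOn.le_of_sub_symm {f : ℝ → ℝ} {s θ t : ℝ} (hf : ConvexOn ℝ (Set.Icc 0 s) f)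
    (hsymm : ∀ t, f (s - t) = f t) (hθ : 0 ≤ θ) (hθt : θ ≤ t) (hts : t ≤ s - θ) :
    f t ≤ f θ := by
  have := hf.le_on_segment (x := θ) (y := s - θ) ⟨hθ, by linarith⟩ ⟨by linarith, by linarith⟩
    (by rw [segment_eq_Icc (by linarith)]; exact ⟨hθt, hts⟩)
  rwa [hsymm, max_self] at this

theorem convexOn_sum_powerset_ite {ι : Type*} [DecidableEq ι] (M : Finset ι) {u v : ℝ}
    (hvu : v ≤ u) (s : ℝ) :
    ConvexOn ℝ (Set.Icc 0 s) fun t => ∑ B ∈ M.powerset,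
      (if B = ∅ ∨ B = M then u else v) * ((s - t) ^ #B * t ^ #(M \ B)) := by
  rcases M.eq_empty_or_nonempty with rfl | hM
  · simpa using convexOn_const u (convex_Icc 0 s)
  have hclosed : ∀ t, ∑ B ∈ M.powerset,
      (if B = ∅ ∨ B = M then u else v) * ((s - t) ^ #B * t ^ #(M \ B))
      = v * s ^ #M + (u - v) * (t ^ #M + (s - t) ^ #M) := by
    intro t
    have hsplit : ∀ B, (if B = ∅ ∨ B = M then u else v) * ((s - t) ^ #B * t ^ #(M \ B))
        = v * ((s - t) ^ #B * t ^ #(M \ B))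
          + if B = ∅ ∨ B = M then (u - v) * ((s - t) ^ #B * t ^ #(M \ B)) else 0 := by
      intro B; split_ifs <;> ring
    have hext : M.powerset.filter (fun B => B = ∅ ∨ B = M) = {∅, M} := by
      ext B; simp only [mem_filter, mem_powerset, mem_insert, mem_singleton]
      constructor
      · exact fun h => h.2
      · rintro (rfl | rfl) <;> simp
    have hbinom : ∑ B ∈ M.powerset, (s - t) ^ #B * t ^ #(M \ B) = s ^ #M := by
      rw [← sub_add_cancel s t, ← sum_pow_mul_eq_add_pow, add_sub_cancel_right]
      exact sum_congr rfl fun B hB => by rw [card_sdiff_of_subset (mem_powerset.1 hB)]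
    rw [sum_congr rfl fun B _ => hsplit B, sum_add_distrib, ← mul_sum, hbinom, ← sum_filter,
      hext, sum_pair hM.ne_empty.symm]
    simp
    ring
  simp only [hclosed]
  exact (convexOn_const _ (convex_Icc 0 s)).add <| ConvexOn.smul (sub_nonneg.2 hvu) <|
    ((convexOn_pow _).subset (fun x hx => hx.1) (convex_Icc 0 s)).add
      ((convexOn_sub_pow s _).subset (fun x hx => hx.2) (convex_Icc 0 s))

theorem Fintype.sum_eq_sum_sum_powerset_piecewise {ι α M : Type*} [Fintype ι] [DecidableEq ι]
    [Fintype α] [DecidableEq α] [AddCommMonoid M] {a b : α} (hab : a ≠ b)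
    (F : (ι → α) → M) :
    ∑ f, F f = ∑ g ∈ univ.filter (fun g : ι → α => ∀ i, g i ≠ b),
      ∑ B ∈ (univ.filter fun i => g i = a).powerset, F (B.piecewise (fun _ => b) g) := by
  let merge : (ι → α) → ι → α := fun f i => if f i = b then a else f i
  rw [← Finset.sum_fiberwise_of_maps_to (g := merge) (t := univ.filter fun g => ∀ i, g i ≠ b)
    fun f _ => by simpa [merge] using fun i => by split_ifs <;> assumption]
  refine Finset.sum_congr rfl fun g hg => ?_
  symm
  refine Finset.sum_nbij' (fun B => B.piecewise (fun _ => b) g)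
    (fun f => univ.filter fun i => f i = b) ?_ ?_ ?_ ?_ fun _ _ => rfl
  all_goals simp only [mem_filter, mem_univ, true_and, mem_powerset] at hg ⊢
  · intro B hB
    ext i
    by_cases hi : i ∈ B
    · simpa [merge, hi] using (mem_filter.1 (hB hi)).2.symm
    · simp [merge, hi, hg i]
  · rintro f rfl i
    simp +contextual [merge]
  · intro B hB
    ext i
    by_cases hi : i ∈ B <;> simp [hi, hg i]
  · rintro f rfl
    ext i
    by_cases hi : f i = b <;> simp [merge, hi]

theorem Fintype.eq_of_sum_eq_of_forall_ne {ι M : Type*} [Fintype ι] [DecidableEq ι]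
    [AddCancelCommMonoid M] {r q : ι → M} {j : ι} (hsum : ∑ l, r l = ∑ l, q l)
    (hoff : ∀ l, l ≠ j → r l = q l) : r = q := by
  ext l
  rcases eq_or_ne l j with rfl | hlj
  · have hrest : ∑ m ∈ univ.erase l, r m = ∑ m ∈ univ.erase l, q m :=
      Finset.sum_congr rfl fun m hm => hoff m (ne_of_mem_erase hm)
    rw [← add_sum_erase _ _ (mem_univ l), ← add_sum_erase _ _ (mem_univ l), hrest] at hsum
    exact add_right_cancel hsum
  · exact hoff l hlj

noncomputable def tailWeight {n : ℕ} (c k : ℕ) (w : Fin (n + 1) → ℝ) : ℝ :=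
  ∑ f : Fin k → Fin (n + 1), if nonnullCount f < c then ∏ t, w (f t) else 0

section

variable {n k : ℕ}

theorem nonnullCount_perm_comp (σ : Equiv.Perm (Fin (n + 1))) (hσ : σ 0 = 0)
    (f : Fin k → Fin (n + 1)) : nonnullCount (σ ∘ f) = nonnullCount f := by
  rw [nonnullCount, nonnullCount, ← image_image, ← hσ, ← image_erase σ.injective,
    card_image_of_injective _ σ.injective, hσ]

theorem nonnullCount_piecewise {a b : Fin (n + 1)} (ha : a ≠ 0) (hb : b ≠ 0) (hab : a ≠ b)
    {g : Fin k → Fin (n + 1)} (hg : ∀ i, g i ≠ b) {B : Finset (Fin k)}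
    (hB : B ⊆ univ.filter fun i => g i = a) :
    nonnullCount (B.piecewise (fun _ => b) g)
      = nonnullCount g + if B = ∅ ∨ B = univ.filter (fun i => g i = a) then 0 else 1 := by
  set M := univ.filter fun i => g i = a
  by_cases hB₀ : B = ∅
  · subst hB₀; simp
  by_cases hBM : B = M
  · have hswap : B.piecewise (fun _ => b) g = Equiv.swap a b ∘ g := by
      ext i
      by_cases hi : g i = a
      · simp [hBM, M, hi]
      · simp [hBM, M, hi, Equiv.swap_apply_of_ne_of_ne hi (hg i)]
    rw [hswap, nonnullCount_perm_comp _ (Equiv.swap_apply_of_ne_of_ne ha.symm hb.symm)]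
    simp [hBM]
  have himage : image (B.piecewise (fun _ => b) g) univ = insert b (image g univ) := by
    obtain ⟨i₀, hi₀⟩ := nonempty_iff_ne_empty.2 hB₀
    obtain ⟨i₁, hi₁M, hi₁B⟩ := not_subset.1 fun h => hBM (hB.antisymm h)
    ext x
    simp only [mem_image, mem_univ, true_and, mem_insert]
    constructor
    · rintro ⟨i, rfl⟩
      by_cases hi : i ∈ B
      · simp [hi]
      · exact Or.inr ⟨i, by simp [hi]⟩
    · rintro (rfl | ⟨i, rfl⟩)
      · exact ⟨i₀, by simp [hi₀]⟩
      by_cases hi : i ∈ B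
      · refine ⟨i₁, ?_⟩
        simp only [M, mem_filter, mem_univ, true_and] at hi₁M
        simp [hi₁B, hi₁M, (mem_filter.1 (hB hi)).2]
      · exact ⟨i, by simp [hi]⟩
  have hb_notMem : b ∉ (image g univ).erase 0 := by simp [hg]
  rw [nonnullCount, nonnullCount, himage, erase_insert_of_ne hb, card_insert_of_notMem hb_notMem]
  simp [hB₀, hBM]

theorem prod_update_update_piecewise (w : Fin (n + 1) → ℝ) {a b : Fin (n + 1)} (hab : a ≠ b)
    {g : Fin k → Fin (n + 1)} (hg : ∀ i, g i ≠ b) {B : Finset (Fin k)}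
    (hB : B ⊆ univ.filter fun i => g i = a) (t u : ℝ) :
    ∏ i, Function.update (Function.update w a t) b u (B.piecewise (fun _ => b) g i)
      = u ^ #B * t ^ #((univ.filter fun i => g i = a) \ B)
        * ∏ i ∈ (univ.filter fun i => g i = a)ᶜ, w (g i) := by
  set M := univ.filter fun i => g i = a
  rw [← prod_mul_prod_compl M, ← prod_sdiff hB, mul_comm (∏ i ∈ M \ B, _)]
  congr 1
  congr 1
  · rw [← prod_const]
    exact prod_congr rfl fun i hi => by simp [hi]
  · rw [← prod_const]
    refine prod_congr rfl fun i hi => ?_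
    obtain ⟨hiM, hiB⟩ := mem_sdiff.1 hi
    simp only [M, mem_filter, mem_univ, true_and] at hiM
    simp [hiB, hiM, hab]
  · refine prod_congr rfl fun i hi => ?_
    have hiB : i ∉ B := fun h => mem_compl.1 hi (hB h)
    simp only [M, mem_compl, mem_filter, mem_univ, true_and] at hi
    simp [hiB, hi, hg i]

theorem tailProb0_eq_tailWeight (c : ℕ) (p : Fin n → ℝ) :
    tailProb0 n c k p = tailWeight c k (fullDist p) := rfl

theorem tailWeight_comp_perm (c : ℕ) (w : Fin (n + 1) → ℝ) (σ : Equiv.Perm (Fin (n + 1)))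
    (hσ : σ 0 = 0) : tailWeight c k (w ∘ σ) = tailWeight c k w :=
  Fintype.sum_equiv ((Equiv.refl _).arrowCongr σ) _ _ fun f => by
    rw [show (Equiv.refl _).arrowCongr σ f = σ ∘ f from rfl, nonnullCount_perm_comp σ hσ]
    rfl

theorem tailWeight_update_update_sub (c : ℕ) (w : Fin (n + 1) → ℝ) {a b : Fin (n + 1)}
    (ha : a ≠ 0) (hb : b ≠ 0) (hab : a ≠ b) (s t : ℝ) :
    tailWeight c k (Function.update (Function.update w a (s - t)) b (s - (s - t)))
      = tailWeight c k (Function.update (Function.update w a t) b (s - t)) := by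
  rw [← tailWeight_comp_perm c _ (Equiv.swap a b) (Equiv.swap_apply_of_ne_of_ne ha.symm hb.symm)]
  congr 1
  ext x
  rcases eq_or_ne x a with rfl | hxa
  · simp [hab]
  rcases eq_or_ne x b with rfl | hxb
  · simp [hab]
  · simp [Equiv.swap_apply_of_ne_of_ne hxa hxb, hxa, hxb]

theorem convexOn_tailWeight_update_update (c : ℕ) {w : Fin (n + 1) → ℝ} (hw : ∀ x, 0 ≤ w x)
    {a b : Fin (n + 1)} (ha : a ≠ 0) (hb : b ≠ 0) (hab : a ≠ b) (s : ℝ) :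
    ConvexOn ℝ (Set.Icc 0 s)
      fun t => tailWeight c k (Function.update (Function.update w a t) b (s - t)) := by
  let M : (Fin k → Fin (n + 1)) → Finset (Fin k) := fun g => univ.filter fun i => g i = a
  let u : (Fin k → Fin (n + 1)) → ℝ := fun g => if nonnullCount g < c then 1 else 0
  let v : (Fin k → Fin (n + 1)) → ℝ := fun g => if nonnullCount g + 1 < c then 1 else 0
  have hfibers : ∀ t, tailWeight c k (Function.update (Function.update w a t) b (s - t))
      = ∑ g ∈ univ.filter (fun g : Fin k → Fin (n + 1) => ∀ i, g i ≠ b),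
          (∏ i ∈ (M g)ᶜ, w (g i)) • ∑ B ∈ (M g).powerset,
            (if B = ∅ ∨ B = M g then u g else v g) * ((s - t) ^ #B * t ^ #(M g \ B)) := by
    intro t
    rw [tailWeight, Fintype.sum_eq_sum_sum_powerset_piecewise hab]
    -- the two filters carry different (but equal) `DecidablePred` instances
    refine sum_congr (by congr) fun g hg => ?_
    rw [smul_eq_mul, mul_sum]
    refine sum_congr rfl fun B hB => ?_
    have hg' := (mem_filter.1 hg).2
    rw [mem_powerset] at hB
    rw [nonnullCount_piecewise ha hb hab hg' hB, prod_update_update_piecewise w hab hg' hB]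
    by_cases hBM : B = ∅ ∨ B = M g
    · simp only [M] at hBM
      simp only [hBM, if_true, add_zero, u]
      split_ifs <;> ring
    · simp only [M] at hBM
      simp only [hBM, if_false, v]
      split_ifs <;> ring
  simp only [hfibers]
  refine ConvexOn.finset_sum (convex_Icc 0 s) fun g _ => ?_
  refine ConvexOn.smul (prod_nonneg fun i _ => hw _) (convexOn_sum_powerset_ite _ ?_ s)
  simp only [u, v]
  split_ifs <;> norm_num
  omega

theorem fullDist_nonneg {p : Fin n → ℝ} (hp : ∀ l, 0 ≤ p l) (hsum : ∑ l, p l ≤ 1)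
    (x : Fin (n + 1)) : 0 ≤ fullDist p x := by
  cases x using Fin.cases with
  | zero => simpa [fullDist] using hsum
  | succ l => simpa [fullDist] using hp l

theorem fullDist_eq_update_update {p p' : Fin n → ℝ} {i j : Fin n} (hsum : ∑ l, p' l = ∑ l, p l)
    (hoff : ∀ l, l ≠ i → l ≠ j → p' l = p l) :
    fullDist p' = Function.update (Function.update (fullDist p) i.succ (p' i)) j.succ (p' j) := by
  ext x
  cases x using Fin.cases with
  | zero =>
    rw [Function.update_of_ne (Fin.succ_ne_zero j).symm,
      Function.update_of_ne (Fin.succ_ne_zero i).symm]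
    simp [fullDist, hsum]
  | succ l =>
    rcases eq_or_ne l j with rfl | hlj
    · simp [fullDist]
    rcases eq_or_ne l i with rfl | hli
    · simp [fullDist, hlj]
    · simp [fullDist, hli, hlj, hoff l hli hlj]

theorem tailProb0_le_transfer (c : ℕ) {p : Fin n → ℝ} (hp : ∀ l, 0 ≤ p l) (hsum : ∑ l, p l ≤ 1)
    {i j : Fin n} (hij : i ≠ j) {θ : ℝ} (hθ : 0 ≤ θ) (hθi : θ ≤ p i) (hθj : θ ≤ p j) :
    tailProb0 n c k p ≤ tailProb0 n c k (p - Pi.single i (p i - θ) + Pi.single j (p i - θ)) := by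
  set p' := p - Pi.single i (p i - θ) + Pi.single j (p i - θ)
  set s := p i + p j
  let G : ℝ → ℝ := fun t =>
    tailWeight c k (Function.update (Function.update (fullDist p) i.succ t) j.succ (s - t))
  have hsucc : i.succ ≠ j.succ := (Fin.succ_injective n).ne hij
  have hG_p : tailProb0 n c k p = G (p i) := by
    rw [tailProb0_eq_tailWeight,
      fullDist_eq_update_update (p' := p) (i := i) (j := j) rfl fun _ _ _ => rfl]
    simp only [G, s, add_sub_cancel_left]
  have hG_p' : tailProb0 n c k p' = G θ := by
    have hoff : ∀ l, l ≠ i → l ≠ j → p' l = p l := fun l hli hlj => by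
      simp [p', hli, hlj]
    have hsum' : ∑ l, p' l = ∑ l, p l := by
      simp [p', sum_add_distrib, sum_sub_distrib]
    have hp'i : p' i = θ := by simp [p', hij]
    have hp'j : p' j = s - θ := by simp [p', hij.symm, s]; ring
    rw [tailProb0_eq_tailWeight, fullDist_eq_update_update hsum' hoff, hp'i, hp'j]
  have hconvex : ConvexOn ℝ (Set.Icc 0 s) G :=
    convexOn_tailWeight_update_update c (fullDist_nonneg hp hsum) (Fin.succ_ne_zero i)
      (Fin.succ_ne_zero j) hsucc s
  have hsymm : ∀ t, G (s - t) = G t := fun t =>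
    tailWeight_update_update_sub c _ (Fin.succ_ne_zero i) (Fin.succ_ne_zero j) hsucc s t
  rw [hG_p, hG_p']
  exact hconvex.le_of_sub_symm hsymm hθ hθi (by linarith)

theorem tailProb0_le_of_forall_ne_eq (c : ℕ) {θ : ℝ} (hθ : 0 ≤ θ) {j : Fin n} {q : Fin n → ℝ}
    (hq : ∀ l, l ≠ j → q l = θ) (hq₁ : ∑ l, q l ≤ 1) (S : Finset (Fin n)) :
    ∀ r : Fin n → ℝ, ∑ l, r l = ∑ l, q l → (∀ l, θ ≤ r l) → (∀ l ∉ S, l ≠ j → r l = θ) →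
      tailProb0 n c k r ≤ tailProb0 n c k q := by
  induction S using Finset.induction_on with
  | empty =>
    intro r hsum _ hθr
    rw [Fintype.eq_of_sum_eq_of_forall_ne hsum fun l hl =>
      (hθr l (notMem_empty l) hl).trans (hq l hl).symm]
  | insert i S hi ih =>
    intro r hsum hθr hS
    rcases eq_or_ne i j with rfl | hij
    · exact ih r hsum hθr fun l hl hlj => hS l (by simp [hl, hlj]) hlj
    set r' := r - Pi.single i (r i - θ) + Pi.single j (r i - θ)
    refine (tailProb0_le_transfer c (fun l => hθ.trans (hθr l)) (hsum ▸ hq₁) hij hθ (hθr i)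
      (hθr j)).trans (ih r' ?_ ?_ ?_)
    · simp [r', sum_add_distrib, sum_sub_distrib, hsum]
    · intro l
      rcases eq_or_ne l i with rfl | hli
      · simp [r', hij]
      rcases eq_or_ne l j with rfl | hlj
      · simp [r', hli]; linarith [hθr i, hθr l]
      · simpa [r', hli, hlj] using hθr l
    · intro l hl hlj
      rcases eq_or_ne l i with rfl | hli
      · simp [r', hij]
      · simpa [r', hli, hlj] using hS l (by simp [hl, hli]) hlj

end

theorem extreme_maximizes_general (n : ℕ) (p0 θ : ℝ)
    (hp0 : 0 ≤ p0) (hθ : 0 < θ)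
    (p : Fin n → ℝ) (hpsum : ∑ i, p i = 1 - p0)
    (hpθ : ∀ i, θ ≤ p i)
    (q : Fin n → ℝ) (j : Fin n) (hqj : q j = 1 - p0 - (n - 1) * θ)
    (hq : ∀ i, i ≠ j → q i = θ)
    (c : ℕ) (k : ℕ) :
    tailProb0 n c k p ≤ tailProb0 n c k q := by
  have hqsum : ∑ i, q i = 1 - p0 := by
    rw [← add_sum_erase _ _ (mem_univ j), sum_congr rfl fun i hi => hq i (ne_of_mem_erase hi),
      sum_const, card_erase_of_mem (mem_univ j), card_univ, Fintype.card_fin, nsmul_eq_mul,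
      Nat.cast_pred j.pos, hqj]
    ring
  exact tailProb0_le_of_forall_ne_eq c hθ.le hq (by linarith) univ p (hpsum.trans hqsum.symm) hpθ
    (by simp)

/-- Theorem 4 of the paper: on `𝒜_θ = {p : ∑ pᵢ = 1 - p₀, pᵢ ≥ θ}`, the collection
time is stochastically maximized by the distributions `q ∈ ℬ_θ` having all
entries equal to `θ` except one equal to `γ = 1 - p₀ - (n-1)θ`. -/
theorem extreme_maximizes (n : ℕ) (hn : 1 ≤ n) (p0 θ : ℝ)
    (hp0 : 0 ≤ p0) (hp01 : p0 < 1) (hθ : 0 < θ) (hθ2 : θ ≤ (1 - p0) / n)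
    (p : Fin n → ℝ) (hp : ∀ i, p i ∈ Set.Ioo (0:ℝ) 1) (hpsum : ∑ i, p i = 1 - p0)
    (hpθ : ∀ i, θ ≤ p i)
    (q : Fin n → ℝ) (j : Fin n) (hqj : q j = 1 - p0 - (n - 1) * θ)
    (hq : ∀ i, i ≠ j → q i = θ)
    (c : ℕ) (hc : 1 ≤ c) (hcn : c ≤ n) (k : ℕ) :
    tailProb0 n c k p ≤ tailProb0 n c k q :=
  extreme_maximizes_general n p0 θ hp0 hθ p hpsum hpθ q j hqj hq c k
end

section
/- For probability vectors $p$ on $\{1,\ldots,n\}$ (with $p_0 = 0$) and the uniform distribution $u = (1/n,\ldots,1/n)$, the expected collection times satisfy $\mathbb{E}[T_{c,n}(u)] \leq \mathbb{E}[T_{c,n}(p)]$ for every $c \in \{1,\ldots,n\}$. -/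
open Finset

/-!
For fixed `k`, `Pr{T > k}` is a Schur-convex function of `p`, hence smallest at the uniform
distribution; since `Pr{T > k} ≤ ∑ᵢ (1 - pᵢ)ᵏ`, the tail sums converge and can be compared termwise.

Schur-convexity is proved one transfer at a time: replacing `(pᵢ, pⱼ) = (x, y)` by
`(a x + (1 - a) y, (1 - a) x + a y)` does not increase `Pr{T > k}`. Group the draw sequences by
the sequence `g` obtained by relabelling every `j` as `i`. If `g` has `d` distinct values and takes
the value `i` at `m` draws, its group contributes a common factor times `0`, `x ^ m + y ^ m` or
`(x + y) ^ m` according as `c ≤ d`, `c = d + 1` or `c > d + 1`, and none of these increases under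
the transfer. Each transfer can be chosen to put one more coordinate at `1 / n`.
-/

lemma pow_add_pow_mix_le {x y a : ℝ} (hx : 0 ≤ x) (hy : 0 ≤ y) (ha₀ : 0 ≤ a) (ha₁ : a ≤ 1)
    (m : ℕ) :
    (a * x + (1 - a) * y) ^ m + ((1 - a) * x + a * y) ^ m ≤ x ^ m + y ^ m := by
  have hconv := (convexOn_pow (𝕜 := ℝ) m).2 (Set.mem_Ici.2 hx) (Set.mem_Ici.2 hy)
  have h₁ := hconv ha₀ (sub_nonneg.2 ha₁) (by ring)
  have h₂ := hconv (sub_nonneg.2 ha₁) ha₀ (by ring)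
  simp only [smul_eq_mul] at h₁ h₂
  linarith

lemma sum_powerset_mix_le {ι : Type*} [DecidableEq ι] (M : Finset ι) (d c : ℕ)
    {x y a : ℝ} (hx : 0 ≤ x) (hy : 0 ≤ y) (ha₀ : 0 ≤ a) (ha₁ : a ≤ 1) :
    ∑ S ∈ M.powerset, (if d + (if S = ∅ ∨ S = M then 0 else 1) < c then
      ((1 - a) * x + a * y) ^ #S * (a * x + (1 - a) * y) ^ #(M \ S) else 0) ≤
    ∑ S ∈ M.powerset, (if d + (if S = ∅ ∨ S = M then 0 else 1) < c then
      y ^ #S * x ^ #(M \ S) else 0) := by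
  rcases M.eq_empty_or_nonempty with rfl | hM
  · simp
  rcases lt_trichotomy (d + 1) c with hc | rfl | hc
  · -- every subset counts, and the binomial theorem leaves a function of `x + y`
    have hall : ∀ u v : ℝ, ∑ S ∈ M.powerset, (if d + (if S = ∅ ∨ S = M then 0 else 1) < c then
        v ^ #S * u ^ #(M \ S) else 0) = (v + u) ^ #M := by
      intro u v
      rw [← sum_pow_mul_eq_add_pow]
      refine sum_congr rfl fun S hS => ?_
      rw [if_pos (by split <;> omega), card_sdiff_of_subset (mem_powerset.1 hS)]
    rw [hall, hall]
    exact le_of_eq (by ring)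
  · have htwo : ∀ u v : ℝ, ∑ S ∈ M.powerset, (if d + (if S = ∅ ∨ S = M then 0 else 1) < d + 1 then
        v ^ #S * u ^ #(M \ S) else 0) = u ^ #M + v ^ #M := by
      intro u v
      rw [sum_eq_add (∅ : Finset ι) M hM.ne_empty.symm]
      · simp
      · intro S _ hS
        rw [if_neg (by simp [hS.1, hS.2])]
      · simp
      · simp
    rw [htwo, htwo]
    exact pow_add_pow_mix_le hx hy ha₀ ha₁ _
  · rw [sum_eq_zero, sum_eq_zero] <;> intro S _ <;> rw [if_neg (by split <;> omega)]

section Merge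

variable {n k : ℕ} {i j : Fin n} {g : Fin k → Fin n} {M : Finset (Fin k)}

lemma distinctCount_comp_of_injective {m : ℕ} {σ : Fin n → Fin m} (hσ : Function.Injective σ)
    (f : Fin k → Fin n) : distinctCount (σ ∘ f) = distinctCount f := by
  rw [distinctCount, ← image_image, card_image_of_injective _ hσ, distinctCount]

def mergeInto (i j : Fin n) (f : Fin k → Fin n) : Fin k → Fin n :=
  fun t => if f t = j then i else f t

lemma piecewise_filter_mergeInto (i j : Fin n) (f : Fin k → Fin n) :
    (univ.filter (f · = j)).piecewise (fun _ => j) (mergeInto i j f) = f := by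
  ext t
  by_cases h : f t = j <;> simp [piecewise, mergeInto, h]

lemma sum_mergeInto_eq_sum_powerset {β : Type*} [AddCommMonoid β] (F : (Fin k → Fin n) → β)
    (hg : ∀ t, g t ≠ j) (hM : ∀ t, t ∈ M ↔ g t = i) :
    ∑ f with mergeInto i j f = g, F f = ∑ S ∈ M.powerset, F (S.piecewise (fun _ => j) g) := by
  have hinv : ∀ f ∈ univ.filter (mergeInto i j · = g),
      (univ.filter (f · = j)).piecewise (fun _ => j) g = f := fun f hf => by
    rw [← (mem_filter.1 hf).2, piecewise_filter_mergeInto]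
  refine sum_nbij' (fun f => univ.filter (f · = j)) (fun S => S.piecewise (fun _ => j) g)
    ?_ ?_ hinv ?_ fun f hf => by rw [hinv f hf]
  · intro f hf
    refine mem_powerset.2 fun t ht => ?_
    rw [mem_filter] at hf ht
    rw [hM, ← hf.2, mergeInto, if_pos ht.2]
  · intro S hS
    refine mem_filter.2 ⟨mem_univ _, funext fun t => ?_⟩
    by_cases ht : t ∈ S
    · simp [mergeInto, ht, ((hM t).1 (mem_powerset.1 hS ht)).symm]
    · simp [mergeInto, ht, hg t]
  · intro S hS
    ext t
    by_cases ht : t ∈ S <;> simp [ht, hg t]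

lemma prod_comp_piecewise_const (r : Fin n → ℝ) (hM : ∀ t, t ∈ M ↔ g t = i) {S : Finset (Fin k)}
    (hS : S ⊆ M) :
    ∏ t, r (S.piecewise (fun _ => j) g t) = r j ^ #S * r i ^ #(M \ S) * ∏ t ∈ Mᶜ, r (g t) := by
  rw [← prod_mul_prod_compl M, ← prod_sdiff hS]
  have hMS : ∏ t ∈ M \ S, r (S.piecewise (fun _ => j) g t) = r i ^ #(M \ S) :=
    prod_eq_pow_card fun t ht => by
      rw [mem_sdiff, hM] at ht
      rw [piecewise_eq_of_notMem _ _ _ ht.2, ht.1]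
  have hMc : ∏ t ∈ Mᶜ, r (S.piecewise (fun _ => j) g t) = ∏ t ∈ Mᶜ, r (g t) :=
    prod_congr rfl fun t ht => by
      rw [piecewise_eq_of_notMem _ _ _ fun h => mem_compl.1 ht (hS h)]
  rw [hMS, hMc, prod_congr rfl fun t ht => by rw [piecewise_eq_of_mem _ _ _ ht], prod_const]
  ring

lemma distinctCount_piecewise (hg : ∀ t, g t ≠ j) (hM : ∀ t, t ∈ M ↔ g t = i)
    {S : Finset (Fin k)} (hS : S ⊆ M) :
    distinctCount (S.piecewise (fun _ => j) g) =
      distinctCount g + if S = ∅ ∨ S = M then 0 else 1 := by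
  by_cases hS₀ : S = ∅
  · subst hS₀
    simp
  by_cases hSM : S = M
  · subst hSM
    have hswap : S.piecewise (fun _ => j) g = Equiv.swap i j ∘ g := by
      ext t
      by_cases ht : t ∈ S
      · rw [piecewise_eq_of_mem _ _ _ ht, Function.comp_apply, (hM t).1 ht,
          Equiv.swap_apply_left]
      · rw [piecewise_eq_of_notMem _ _ _ ht, Function.comp_apply,
          Equiv.swap_apply_of_ne_of_ne (mt (hM t).2 ht) (hg t)]
    simp [hswap, distinctCount_comp_of_injective (Equiv.injective _)]
  obtain ⟨t₀, ht₀⟩ := nonempty_iff_ne_empty.2 hS₀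
  obtain ⟨t₁, ht₁M, ht₁S⟩ := exists_of_ssubset (ssubset_of_subset_of_ne hS hSM)
  -- the value `i` is still taken on `M \ S`, so only the new value `j` is gained
  have himage : univ.image (S.piecewise (fun _ => j) g) = insert j (univ.image g) := by
    ext v
    simp only [mem_image, mem_insert, mem_univ, true_and]
    constructor
    · rintro ⟨t, rfl⟩
      by_cases ht : t ∈ S
      · exact Or.inl (piecewise_eq_of_mem _ _ _ ht)
      · exact Or.inr ⟨t, (piecewise_eq_of_notMem _ _ _ ht).symm⟩
    · rintro (rfl | ⟨t, rfl⟩)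
      · exact ⟨t₀, piecewise_eq_of_mem _ _ _ ht₀⟩
      by_cases ht : t ∈ S
      · exact ⟨t₁, by rw [piecewise_eq_of_notMem _ _ _ ht₁S, (hM _).1 ht₁M, (hM _).1 (hS ht)]⟩
      · exact ⟨t, piecewise_eq_of_notMem _ _ _ ht⟩
  have hj : j ∉ univ.image g := by simpa using hg
  rw [if_neg (by tauto), distinctCount, himage, card_insert_of_notMem hj, distinctCount]

lemma tailProb_mix_le {c : ℕ} {p q : Fin n → ℝ} (hp : ∀ l, 0 ≤ p l) (hij : i ≠ j) {a : ℝ}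
    (ha₀ : 0 ≤ a) (ha₁ : a ≤ 1) (hqi : q i = a * p i + (1 - a) * p j)
    (hqj : q j = (1 - a) * p i + a * p j) (hq : ∀ l, l ≠ i → l ≠ j → q l = p l) :
    tailProb n c k q ≤ tailProb n c k p := by
  have hfib : ∀ r : Fin n → ℝ, tailProb n c k r = ∑ g : Fin k → Fin n with ∀ t, g t ≠ j,
      ∑ f with mergeInto i j f = g, (if distinctCount f < c then ∏ t, r (f t) else 0) := by
    refine fun r => (sum_fiberwise_of_maps_to (g := mergeInto i j)
      (fun f _ => mem_filter.2 ⟨mem_univ _, fun t => ?_⟩) _).symm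
    unfold mergeInto
    split_ifs with h
    exacts [hij, h]
  rw [hfib, hfib]
  refine sum_le_sum fun g hg => ?_
  replace hg := (mem_filter.1 hg).2
  set M : Finset (Fin k) := univ.filter (g · = i)
  have hM : ∀ t, t ∈ M ↔ g t = i := by simp [M]
  have hfactor : ∀ r : Fin n → ℝ,
      ∑ f with mergeInto i j f = g, (if distinctCount f < c then ∏ t, r (f t) else 0) =
        (∑ S ∈ M.powerset, if distinctCount g + (if S = ∅ ∨ S = M then 0 else 1) < c then
          r j ^ #S * r i ^ #(M \ S) else 0) * ∏ t ∈ Mᶜ, r (g t) := by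
    intro r
    rw [sum_mergeInto_eq_sum_powerset _ hg hM, sum_mul]
    refine sum_congr rfl fun S hS => ?_
    rw [distinctCount_piecewise hg hM (mem_powerset.1 hS),
      prod_comp_piecewise_const r hM (mem_powerset.1 hS), ite_mul, zero_mul]
  have hrest : ∏ t ∈ Mᶜ, q (g t) = ∏ t ∈ Mᶜ, p (g t) :=
    prod_congr rfl fun t ht => hq _ (by simpa [hM] using ht) (hg t)
  rw [hfactor, hfactor, hrest, hqi, hqj]
  exact mul_le_mul_of_nonneg_right (sum_powerset_mix_le M _ c (hp i) (hp j) ha₀ ha₁)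
    (prod_nonneg fun t _ => hp _)

end Merge

section TailProb

variable {n c k : ℕ} {p : Fin n → ℝ}

lemma exists_lt_lt_of_ne_uniform (hsum : ∑ l, p l = 1) (hu : p ≠ fun _ => (1 / n : ℝ)) :
    ∃ i j, p j < 1 / n ∧ (1 / n : ℝ) < p i := by
  have hn : (n : ℝ) ≠ 0 := Nat.cast_ne_zero.2 <| by
    rintro rfl
    simp at hsum
  have hdev : ∑ l, (p l - 1 / n) = 0 := by
    simp [sum_sub_distrib, hsum, hn]
  have hne : ∃ l ∈ univ, p l - 1 / n ≠ 0 := by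
    by_contra! h
    exact hu (funext fun l => sub_eq_zero.1 (h l (mem_univ l)))
  obtain ⟨i, -, hi⟩ := exists_pos_of_sum_zero_of_exists_nonzero _ hdev hne
  obtain ⟨j, -, hj⟩ := exists_pos_of_sum_zero_of_exists_nonzero (fun l => -(p l - 1 / n))
    (by rw [sum_neg_distrib, hdev, neg_zero])
    (let ⟨l, hl, h⟩ := hne; ⟨l, hl, neg_ne_zero.2 h⟩)
  exact ⟨i, j, by linarith, by linarith⟩

lemma exists_tailProb_le_of_ne_uniform (hp : ∀ l, 0 ≤ p l) (hsum : ∑ l, p l = 1)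
    (hu : p ≠ fun _ => (1 / n : ℝ)) :
    ∃ q : Fin n → ℝ, (∀ l, 0 ≤ q l) ∧ ∑ l, q l = 1 ∧
      #{l | q l ≠ 1 / n} < #{l | p l ≠ 1 / n} ∧ tailProb n c k q ≤ tailProb n c k p := by
  obtain ⟨i, j, hj, hi⟩ := exists_lt_lt_of_ne_uniform hsum hu
  have hij : i ≠ j := by
    rintro rfl
    linarith
  set δ := p i - 1 / n
  set q : Fin n → ℝ := p + Pi.single j δ - Pi.single i δ
  have hqi : q i = 1 / n := by simp [q, hij, δ]
  have hqj : q j = p j + δ := by simp [q, hij.symm]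
  have hq : ∀ l, l ≠ i → l ≠ j → q l = p l := fun l hli hlj => by simp [q, hli, hlj]
  refine ⟨q, fun l => ?_, ?_, card_lt_card ?_, ?_⟩
  · by_cases hli : l = i
    · rw [hli, hqi]
      positivity
    by_cases hlj : l = j
    · rw [hlj, hqj]
      linarith [hp j]
    rw [hq l hli hlj]
    exact hp l
  · simp [q, sum_add_distrib, sum_sub_distrib, hsum]
  · refine (ssubset_iff_of_subset fun l hl => ?_).2 ⟨i, by simpa using hi.ne', by simp [hqi]⟩
    rw [mem_filter] at hl ⊢
    refine ⟨mem_univ l, ?_⟩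
    by_cases hli : l = i
    · exact absurd (hli ▸ hqi) hl.2
    by_cases hlj : l = j
    · exact hlj ▸ hj.ne
    exact hq l hli hlj ▸ hl.2
  · set a := (1 / n - p j) / (p i - p j)
    have ha : a * (p i - p j) = 1 / n - p j := div_mul_cancel₀ _ (by linarith)
    have ha₀ : 0 ≤ a := div_nonneg (by linarith) (by linarith)
    have ha₁ : a ≤ 1 := (div_le_one (by linarith)).2 (by linarith)
    refine tailProb_mix_le hp hij ha₀ ha₁ (a := a) ?_ ?_ hq
    · rw [hqi]
      linear_combination -ha
    · rw [hqj]
      linear_combination ha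

lemma tailProb_uniform_le (hp : ∀ l, 0 ≤ p l) (hsum : ∑ l, p l = 1) :
    tailProb n c k (fun _ => 1 / n) ≤ tailProb n c k p := by
  induction h : #{l | p l ≠ 1 / n} using Nat.strong_induction_on generalizing p with
  | _ N ih =>
    by_cases hu : p = fun _ => (1 / n : ℝ)
    · rw [hu]
    obtain ⟨q, hq, hqsum, hcard, hle⟩ :=
      exists_tailProb_le_of_ne_uniform (c := c) (k := k) hp hsum hu
    exact (ih _ (h ▸ hcard) hq hqsum rfl).trans hle

lemma tailProb_nonneg (hp : ∀ l, 0 ≤ p l) : 0 ≤ tailProb n c k p :=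
  sum_nonneg fun f _ => by
    split_ifs
    exacts [prod_nonneg fun t _ => hp _, le_rfl]

lemma tailProb_le_sum_pow (hcn : c ≤ n) (hp : ∀ l, 0 ≤ p l) :
    tailProb n c k p ≤ ∑ i, (∑ l ∈ univ.erase i, p l) ^ k := by
  calc tailProb n c k p ≤ ∑ f : Fin k → Fin n, ∑ i ∈ (univ.image f)ᶜ, ∏ t, p (f t) := by
        refine sum_le_sum fun f _ => ?_
        have hw : 0 ≤ ∏ t, p (f t) := prod_nonneg fun t _ => hp _
        split_ifs with hf
        · -- fewer than `c ≤ n` values are taken, so some coupon is missing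
          have hmiss : ((univ.image f)ᶜ).Nonempty := by
            rw [nonempty_iff_ne_empty, Ne, compl_eq_empty_iff, ← card_eq_iff_eq_univ]
            rw [distinctCount] at hf
            simp only [Fintype.card_fin]
            omega
          rw [sum_const, nsmul_eq_mul]
          exact le_mul_of_one_le_left hw (by exact_mod_cast hmiss.card_pos)
        · exact sum_nonneg fun _ _ => hw
    _ = ∑ i, ∑ f ∈ Fintype.piFinset fun _ => univ.erase i, ∏ t, p (f t) :=
        sum_comm' fun f i => by simp [Fintype.mem_piFinset, eq_comm]
    _ = ∑ i, (∑ l ∈ univ.erase i, p l) ^ k := by simp_rw [sum_pow']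

lemma summable_tailProb (hcn : c ≤ n) (hp : ∀ l, 0 < p l) (hsum : ∑ l, p l = 1) :
    Summable fun k => tailProb n c k p := by
  refine .of_nonneg_of_le (fun k => tailProb_nonneg fun l => (hp l).le)
    (fun k => tailProb_le_sum_pow hcn fun l => (hp l).le) (summable_sum fun i _ => ?_)
  have hrest : ∑ l ∈ univ.erase i, p l = 1 - p i := by
    rw [← hsum, ← add_sum_erase _ _ (mem_univ i), add_sub_cancel_left]
  exact summable_geometric_of_lt_one (hrest ▸ sum_nonneg fun l _ => (hp l).le)
    (hrest ▸ by linarith [hp i])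

end TailProb

theorem uniform_minimizes_expectation_general (n : ℕ) (p : Fin n → ℝ)
    (hp : ∀ i, p i ∈ Set.Ioo (0:ℝ) 1) (hsum : ∑ i, p i = 1)
    (c : ℕ) (hcn : c ≤ n) :
    ∑' k : ℕ, tailProb n c k (fun _ => 1 / n) ≤ ∑' k : ℕ, tailProb n c k p := by
  have hle : ∀ k, tailProb n c k (fun _ => 1 / n) ≤ tailProb n c k p :=
    fun k => tailProb_uniform_le (fun l => (hp l).1.le) hsum
  have hp_summable := summable_tailProb hcn (fun l => (hp l).1) hsum
  have hu_summable : Summable fun k => tailProb n c k (fun _ => 1 / n) :=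
    hp_summable.of_nonneg_of_le (fun k => tailProb_nonneg fun _ => by positivity) hle
  exact hu_summable.tsum_le_tsum hle hp_summable

/-- The uniform distribution minimizes the expected collection time:
`E[T_{c,n}(u)] ≤ E[T_{c,n}(p)]`, where `E[T] = ∑_{k≥0} Pr{T > k}`. -/
theorem uniform_minimizes_expectation (n : ℕ) (hn : 1 ≤ n) (p : Fin n → ℝ)
    (hp : ∀ i, p i ∈ Set.Ioo (0:ℝ) 1) (hsum : ∑ i, p i = 1)
    (c : ℕ) (hc : 1 ≤ c) (hcn : c ≤ n) :
    ∑' k : ℕ, tailProb n c k (fun _ => 1 / n) ≤ ∑' k : ℕ, tailProb n c k p :=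
  uniform_minimizes_expectation_general n p hp hsum c hcn
end
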